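/- arXiv:2410.16401 — 3 statements merged into one kernel-verified Lean document; each statement's English description precedes it below -/
import Mathlib

section
/- Let φ be infinitely differentiable with φ'(z) ≥ ρ1 and φ'''(z) ≥ ρ2 for all z ∈ ℝ, where ρ1, ρ2 > 0, and assume the coherence assumption with constant μ > 0. Suppose θ* satisfies f_i(θ*) = y_i and φ(θ*_j · x_i) = y_i / m for all i ∈ {1,…,n} and j ∈ {1,…,m}. Then θ* is a global minimizer of G on the zero-loss set: for every θ with f_i(θ) = y_i for all i, one has G(θ*) ≤ G(θ); moreover G(θ*) = m · Σ_{i=1}^n φ'(φ^{-1}(y_i/m))². -/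
open scoped RealInnerProductSpace
open Real Filter

noncomputable section

/-- The parameter space ℝ^{md}: m blocks θ_j ∈ ℝ^d, with the Euclidean norm. -/
abbrev Param (m d : ℕ) : Type := PiLp 2 (fun _ : Fin m => EuclideanSpace ℝ (Fin d))

/-- Network output f_i(θ) = Σ_j φ(θ_j · x_i). -/
def netF {n m d : ℕ} (φ : ℝ → ℝ) (x : Fin n → EuclideanSpace ℝ (Fin d)) (i : Fin n)
    (θ : Param m d) : ℝ := ∑ j, φ ⟪θ j, x i⟫

/-- Euclidean gradient Df_i(θ), with j-th block φ'(θ_j · x_i) x_i. -/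
def gradF {n m d : ℕ} (φ : ℝ → ℝ) (x : Fin n → EuclideanSpace ℝ (Fin d)) (i : Fin n)
    (θ : Param m d) : Param m d := WithLp.toLp 2 fun j => (deriv φ ⟪θ j, x i⟫) • x i

/-- Implicit regularizer G(θ) = Σ_i Σ_j φ'(θ_j · x_i)². -/
def regG {n m d : ℕ} (φ : ℝ → ℝ) (x : Fin n → EuclideanSpace ℝ (Fin d))
    (θ : Param m d) : ℝ := ∑ i, ∑ j, (deriv φ ⟪θ j, x i⟫) ^ 2

/-- Euclidean gradient DG(θ), with j-th block Σ_i 2 φ'(θ_j·x_i) φ''(θ_j·x_i) x_i. -/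
def gradRegG {n m d : ℕ} (φ : ℝ → ℝ) (x : Fin n → EuclideanSpace ℝ (Fin d))
    (θ : Param m d) : Param m d :=
  WithLp.toLp 2 fun j => ∑ i, (2 * deriv φ ⟪θ j, x i⟫ * deriv (deriv φ) ⟪θ j, x i⟫) • x i

/-- Squared loss L(θ) = Σ_i (f_i(θ) − y_i)². -/
def lossL {n m d : ℕ} (φ : ℝ → ℝ) (x : Fin n → EuclideanSpace ℝ (Fin d)) (y : Fin n → ℝ)
    (θ : Param m d) : ℝ := ∑ i, (netF φ x i θ - y i) ^ 2

/-- Jacobian Df(θ) : ℝ^{md} → ℝ^n, whose i-th row is Df_i(θ). -/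
def jacobian {n m d : ℕ} (φ : ℝ → ℝ) (x : Fin n → EuclideanSpace ℝ (Fin d))
    (θ : Param m d) : Param m d →ₗ[ℝ] (Fin n → ℝ) :=
  LinearMap.pi fun i => (innerSL ℝ (gradF φ x i θ)).toLinearMap

/-- Riemannian gradient ∇G(θ): orthogonal projection of DG(θ) onto ker Df(θ). -/
def rgradG {n m d : ℕ} (φ : ℝ → ℝ) (x : Fin n → EuclideanSpace ℝ (Fin d))
    (θ : Param m d) : Param m d :=
  (Submodule.orthogonalProjectionOnto (LinearMap.ker (jacobian φ x θ)) (gradRegG φ x θ) : Param m d)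

/-!
For fixed `i`, only the values `u_j = φ(θ_j · x_i)` are constrained on the zero-loss set, through
`∑_j u_j = y_i`, and `G` contributes `∑_j ψ(u_j)` with `ψ = (φ')² ∘ φ⁻¹`. Since `ψ'(φ a) = 2 φ''(a)`
and `φ''` is increasing, `ψ` is convex; its tangent-line inequality summed over `j` shows that the
equal split `u_j = y_i / m` minimizes `∑_j ψ(u_j)`.
-/

open Set Finset Function

section TangentLine

variable {φ : ℝ → ℝ}

theorem sq_deriv_add_mul_sub_le (hφ : Differentiable ℝ φ) (hφ' : Differentiable ℝ (deriv φ))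
    (hpos : ∀ t, 0 ≤ deriv φ t) (hmono : Monotone (deriv (deriv φ))) (a z : ℝ) :
    deriv φ a ^ 2 + 2 * deriv (deriv φ) a * (φ z - φ a) ≤ deriv φ z ^ 2 := by
  set c := deriv (deriv φ) a
  let F : ℝ → ℝ := fun t => deriv φ t ^ 2 - 2 * c * φ t
  have hF : ∀ t, HasDerivAt F (2 * deriv φ t * (deriv (deriv φ) t - c)) t := fun t =>
    (((hφ' t).hasDerivAt.pow 2).sub ((hφ t).hasDerivAt.const_mul (2 * c))).congr_deriv (by ring)
  have hFd : ∀ s, DifferentiableOn ℝ F s := fun _ t _ =>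
    (hF t).differentiableAt.differentiableWithinAt
  have hmin : IsMinOn F univ a := by
    refine isMinOn_univ_of_deriv (hF a).continuousAt (hFd _) (hFd _) (fun t ht => ?_)
      (fun t ht => ?_) <;> rw [(hF t).deriv]
    · exact mul_nonpos_of_nonneg_of_nonpos (by linarith [hpos t]) (sub_nonpos.2 (hmono ht.le))
    · exact mul_nonneg (by linarith [hpos t]) (sub_nonneg.2 (hmono ht.le))
  have hFaz : F a ≤ F z := hmin (mem_univ z)
  simp only [F] at hFaz
  linarith

theorem sum_sq_deriv_le_of_sum_eq {ι : Type*} [Fintype ι]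
    (hφ : Differentiable ℝ φ) (hφ' : Differentiable ℝ (deriv φ))
    (hpos : ∀ t, 0 ≤ deriv φ t) (hmono : Monotone (deriv (deriv φ)))
    {a z : ι → ℝ} (ha : ∀ j k, a j = a k) (hsum : ∑ j, φ (a j) = ∑ j, φ (z j)) :
    ∑ j, deriv φ (a j) ^ 2 ≤ ∑ j, deriv φ (z j) ^ 2 := by
  rcases isEmpty_or_nonempty ι with hι | ⟨⟨k⟩⟩
  · simp
  calc ∑ j, deriv φ (a j) ^ 2
      = ∑ j, (deriv φ (a j) ^ 2 + 2 * deriv (deriv φ) (a k) * (φ (z j) - φ (a j))) := by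
        rw [sum_add_distrib, ← mul_sum, sum_sub_distrib, hsum, sub_self, mul_zero, add_zero]
    _ ≤ ∑ j, deriv φ (z j) ^ 2 := sum_le_sum fun j _ => by
        simpa only [ha j k] using sq_deriv_add_mul_sub_le hφ hφ' hpos hmono (a j) (z j)

end TangentLine

theorem stmt_1_general
    (n m d : ℕ)
    (x : Fin n → EuclideanSpace ℝ (Fin d))
    (y : Fin n → ℝ)
    (φ : ℝ → ℝ) (hφ : ContDiff ℝ (⊤ : ℕ∞) φ)
    (ρ1 ρ2 : ℝ) (hρ1 : 0 < ρ1) (hρ2 : 0 < ρ2)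
    (hφ' : ∀ z, ρ1 ≤ deriv φ z)
    (hφ''' : ∀ z, ρ2 ≤ deriv (deriv (deriv φ)) z)
    (θs : Param m d)
    (hfit : ∀ i, netF φ x i θs = y i)
    (hopt : ∀ i j, φ ⟪θs j, x i⟫ = y i / (m : ℝ)) :
    (∀ θ : Param m d, (∀ i, netF φ x i θ = y i) → regG φ x θs ≤ regG φ x θ) ∧
    (∀ ν : Fin n → ℝ, (∀ i, φ (ν i) = y i / (m : ℝ)) →
      regG φ x θs = (m : ℝ) * ∑ i, (deriv φ (ν i)) ^ 2) := by
  have hφ1 := (contDiff_infty_iff_deriv.mp hφ).2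
  have hφd : Differentiable ℝ φ := hφ.differentiable (by simp)
  have hφ1d : Differentiable ℝ (deriv φ) := hφ1.differentiable (by simp)
  have hφ2d : Differentiable ℝ (deriv (deriv φ)) :=
    (contDiff_infty_iff_deriv.mp hφ1).2.differentiable (by simp)
  have hinj : Injective φ := (strictMono_of_deriv_pos fun z => hρ1.trans_le (hφ' z)).injective
  have hmono : Monotone (deriv (deriv φ)) :=
    monotone_of_deriv_nonneg hφ2d fun z => hρ2.le.trans (hφ''' z)
  refine ⟨fun θ hθ => sum_le_sum fun i _ => ?_, fun ν hν => ?_⟩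
  · exact sum_sq_deriv_le_of_sum_eq hφd hφ1d (fun t => hρ1.le.trans (hφ' t)) hmono
      (fun j k => hinj ((hopt i j).trans (hopt i k).symm)) ((hfit i).trans (hθ i).symm)
  · have hpre : ∀ i j, ⟪θs j, x i⟫ = ν i := fun i j => hinj ((hopt i j).trans (hν i).symm)
    simp [regG, hpre, mul_sum]

/-- a point with all pre-activations equal to φ⁻¹(y_i/m) is a global
minimizer of G on the zero-loss set, with value m·Σ_i φ'(φ⁻¹(y_i/m))². -/
theorem stmt_1
    (n m d : ℕ) (hn : 1 ≤ n) (hm : 1 ≤ m) (hd : 1 ≤ d)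
    (x : Fin n → EuclideanSpace ℝ (Fin d)) (hx : ∀ i, ‖x i‖ = 1)
    (μ : ℝ) (hμ : 0 < μ)
    (hcoh : ∀ c : Fin n → ℝ, μ * ∑ i, (c i) ^ 2 ≤ ‖∑ i, c i • x i‖ ^ 2)
    (y : Fin n → ℝ)
    (φ : ℝ → ℝ) (hφ : ContDiff ℝ (⊤ : ℕ∞) φ)
    (ρ1 ρ2 : ℝ) (hρ1 : 0 < ρ1) (hρ2 : 0 < ρ2)
    (hφ' : ∀ z, ρ1 ≤ deriv φ z)
    (hφ''' : ∀ z, ρ2 ≤ deriv (deriv (deriv φ)) z)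
    (θs : Param m d)
    (hfit : ∀ i, netF φ x i θs = y i)
    (hopt : ∀ i j, φ ⟪θs j, x i⟫ = y i / (m : ℝ)) :
    (∀ θ : Param m d, (∀ i, netF φ x i θ = y i) → regG φ x θs ≤ regG φ x θ) ∧
    (∀ ν : Fin n → ℝ, (∀ i, φ (ν i) = y i / (m : ℝ)) →
      regG φ x θs = (m : ℝ) * ∑ i, (deriv φ (ν i)) ^ 2) :=
  stmt_1_general n m d x y φ hφ ρ1 ρ2 hρ1 hρ2 hφ' hφ''' θs hfit hopt
end
end

section
/- Suppose φ'(z) > 0 for all z ∈ ℝ and x_1, …, x_n are linearly independent. Then for every θ ∈ ℝ^{md}: (a) the Euclidean gradients Df_1(θ), …, Df_n(θ) ∈ ℝ^{md} are linearly independent, equivalently the Jacobian Df(θ) : ℝ^{md} → ℝ^n is surjective; and (b) the linear span of {Df_1(θ), …, Df_n(θ)} equals the orthogonal complement of ker Df(θ). -/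
open scoped RealInnerProductSpace
open Real Filter

noncomputable section

/-
Restricted to any single block j, the gradient Df_i(θ) is φ'(θ_j · x_i) x_i, a nonzero rescaling of
x_i, so linear independence of the data passes to the gradients. The Jacobian is the map
v ↦ (⟪Df_i(θ), v⟫)_i, whose kernel is the orthogonal complement of the span of the gradients; the
span is finite-dimensional, hence equal to its double orthogonal complement. Composing the Jacobian
with v ↦ Σ a_i Df_i(θ) gives an injective endomorphism of ℝⁿ, since a vector lying both in the span
and in its orthogonal complement vanishes; so the Jacobian is surjective.
-/

section InnerFunctionals

variable {E : Type*} [NormedAddCommGroup E] [InnerProductSpace ℝ E] {ι : Type*}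

theorem ker_pi_innerSL (g : ι → E) :
    LinearMap.ker (LinearMap.pi fun i => (innerSL ℝ (g i)).toLinearMap) =
      (Submodule.span ℝ (Set.range g))ᗮ := by
  rw [LinearMap.ker_pi, Submodule.span_range_eq_iSup, ← Submodule.iInf_orthogonal]
  congr! 1 with i
  ext v
  simp [Submodule.mem_orthogonal_singleton_iff_inner_right]

variable [Fintype ι]

theorem span_range_eq_orthogonal_ker_pi_innerSL (g : ι → E) :
    Submodule.span ℝ (Set.range g) =
      (LinearMap.ker (LinearMap.pi fun i => (innerSL ℝ (g i)).toLinearMap))ᗮ := by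
  have := FiniteDimensional.span_of_finite ℝ (Set.finite_range g)
  rw [ker_pi_innerSL, Submodule.orthogonal_orthogonal]

theorem surjective_pi_innerSL {g : ι → E} (hg : LinearIndependent ℝ g) :
    Function.Surjective (LinearMap.pi fun i => (innerSL ℝ (g i)).toLinearMap) := by
  set T := LinearMap.pi fun i => (innerSL ℝ (g i)).toLinearMap
  set L := Fintype.linearCombination ℝ g
  suffices hinj : Function.Injective (T ∘ₗ L) by
    have hsurj := LinearMap.injective_iff_surjective.mp hinj
    rw [LinearMap.coe_comp] at hsurj
    exact hsurj.of_comp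
  rw [← LinearMap.ker_eq_bot, LinearMap.ker_eq_bot']
  intro a ha
  have hspan : L a ∈ Submodule.span ℝ (Set.range g) := by
    rw [← Fintype.range_linearCombination]
    exact LinearMap.mem_range_self L a
  have hperp : L a ∈ (Submodule.span ℝ (Set.range g))ᗮ := by
    rw [← ker_pi_innerSL]
    exact ha
  have hzero : L a = 0 := by
    simpa using (Submodule.orthogonal_disjoint _).le_bot ⟨hspan, hperp⟩
  exact hg.fintypeLinearCombination_injective (by simpa using hzero)

end InnerFunctionals

theorem linearIndependent_gradF {n m d : ℕ} {φ : ℝ → ℝ} {x : Fin n → EuclideanSpace ℝ (Fin d)}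
    (hx : LinearIndependent ℝ x) (θ : Param m d) (j : Fin m)
    (hφ' : ∀ i, deriv φ ⟪θ j, x i⟫ ≠ 0) :
    LinearIndependent ℝ (fun i => gradF φ x i θ) :=
  .of_comp (PiLp.proj 2 _ j).toLinearMap (hx.units_smul fun i => Units.mk0 _ (hφ' i))

theorem stmt_2_general
    (n m d : ℕ) (hm : 1 ≤ m)
    (x : Fin n → EuclideanSpace ℝ (Fin d))
    (hlin : LinearIndependent ℝ x)
    (φ : ℝ → ℝ)
    (hφ' : ∀ z, 0 < deriv φ z)
    (θ : Param m d) :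
    LinearIndependent ℝ (fun i => gradF φ x i θ) ∧
    Function.Surjective (jacobian φ x θ) ∧
    Submodule.span ℝ (Set.range fun i => gradF φ x i θ)
      = (LinearMap.ker (jacobian φ x θ))ᗮ := by
  have hli := linearIndependent_gradF hlin θ ⟨0, hm⟩ fun i => (hφ' _).ne'
  exact ⟨hli, surjective_pi_innerSL hli, span_range_eq_orthogonal_ker_pi_innerSL _⟩

/-- if φ' > 0 and the data are linearly independent, the gradients
Df_i(θ) are linearly independent (the Jacobian is surjective), and their span is
the orthogonal complement of ker Df(θ). -/
theorem stmt_2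
    (n m d : ℕ) (hn : 1 ≤ n) (hm : 1 ≤ m) (hd : 1 ≤ d)
    (x : Fin n → EuclideanSpace ℝ (Fin d)) (hx : ∀ i, ‖x i‖ = 1)
    (hlin : LinearIndependent ℝ x)
    (φ : ℝ → ℝ) (hφ : ContDiff ℝ (⊤ : ℕ∞) φ)
    (hφ' : ∀ z, 0 < deriv φ z)
    (θ : Param m d) :
    LinearIndependent ℝ (fun i => gradF φ x i θ) ∧
    Function.Surjective (jacobian φ x θ) ∧
    Submodule.span ℝ (Set.range fun i => gradF φ x i θ)
      = (LinearMap.ker (jacobian φ x θ))ᗮ :=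
  stmt_2_general n m d hm x hlin φ hφ' θ
end
end

section
/- Assume the coherence assumption with constant μ > 0 and φ'(z) ≥ ρ1 > 0 for all z ∈ ℝ, and set C = 4 m μ ρ1². Let θ̄ : [0, ∞) → ℝ^{md} be differentiable with θ̄'(t) = −DL(θ̄(t)) for all t ≥ 0. Then for all 0 ≤ s ≤ t: ‖θ̄(t) − θ̄(s)‖ ≤ (2/√C) · (√(L(θ̄(s))) − √(L(θ̄(t)))); in particular ‖θ̄(t) − θ̄(s)‖ ≤ (2/√C) · √(L(θ̄(s))). -/
/-!
Along the gradient flow, `d/dt L(θ) = -‖∇L(θ)‖²`. Coherence together with `φ' ≥ ρ1`, applied to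
each block `θ_j` separately, gives the Polyak–Łojasiewicz inequality `‖∇L‖² ≥ C L`, hence
`d/dt √L(θ) = -‖∇L‖² / (2√L) ≤ -(√C / 2) ‖θ'‖`, and the path length is at most `2/√C` times the
decrease of `√L`. Where `L` vanishes the flow sits at a global minimum, so `∇L = 0` and `L` stays
`0`: the right derivative of `√L(θ)` is still `0` and the comparison argument goes through.
-/

open scoped RealInnerProductSpace
open Real Filter

noncomputable section

section GradientFlow

open Set

variable {E : Type*} [NormedAddCommGroup E] [InnerProductSpace ℝ E] [CompleteSpace E]
  {f : E → ℝ} {θ : ℝ → E} {s : ℝ}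

theorem IsLocalMin.gradient_eq_zero {x : E} (h : IsLocalMin f x) : gradient f x = 0 := by
  simp [gradient, h.fderiv_eq_zero]

theorem gradient_eq_zero_of_nonneg_of_eq_zero (hf0 : ∀ x, 0 ≤ f x) {x : E} (hx : f x = 0) :
    gradient f x = 0 :=
  IsLocalMin.gradient_eq_zero (.of_forall fun y => hx ▸ hf0 y)

theorem hasDerivAt_comp_gradientFlow (hf : Differentiable ℝ f) {τ : ℝ}
    (hθ : HasDerivAt θ (-gradient f (θ τ)) τ) :
    HasDerivAt (fun u => f (θ u)) (-‖gradient f (θ τ)‖ ^ 2) τ := by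
  have h := (hasGradientAt_iff_hasFDerivAt.mp (hf (θ τ)).hasGradientAt).comp_hasDerivAt τ hθ
  rwa [InnerProductSpace.toDual_apply_apply, inner_neg_right, real_inner_self_eq_norm_sq] at h

theorem antitoneOn_comp_gradientFlow (hf : Differentiable ℝ f)
    (hθ : ∀ τ, s ≤ τ → HasDerivAt θ (-gradient f (θ τ)) τ) :
    AntitoneOn (fun u => f (θ u)) (Ici s) := by
  have hderiv τ (hτ : s ≤ τ) := hasDerivAt_comp_gradientFlow hf (hθ τ hτ)
  refine antitoneOn_of_hasDerivWithinAt_nonpos (convex_Ici s)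
    (fun τ hτ => (hderiv τ hτ).continuousAt.continuousWithinAt)
    (fun τ hτ => (hderiv τ (interior_subset hτ)).hasDerivWithinAt) fun τ _ => ?_
  exact neg_nonpos.mpr (sq_nonneg _)

/-- At a zero of `f` the formula reads `0 / 0 = 0`, which is the right derivative there. -/
theorem hasDerivWithinAt_sqrt_comp_gradientFlow (hf : Differentiable ℝ f) (hf0 : ∀ x, 0 ≤ f x)
    (hθ : ∀ τ, s ≤ τ → HasDerivAt θ (-gradient f (θ τ)) τ) {τ : ℝ} (hτ : s ≤ τ) :
    HasDerivWithinAt (fun u => √(f (θ u)))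
      (-‖gradient f (θ τ)‖ ^ 2 / (2 * √(f (θ τ)))) (Ici τ) τ := by
  rcases (hf0 (θ τ)).lt_or_eq with hpos | hzero
  · exact ((hasDerivAt_comp_gradientFlow hf (hθ τ hτ)).sqrt hpos.ne').hasDerivWithinAt
  · have hgrad := gradient_eq_zero_of_nonneg_of_eq_zero hf0 hzero.symm
    have hconst : ∀ u ∈ Ici τ, √(f (θ u)) = √(f (θ τ)) := fun u hu => by
      have := antitoneOn_comp_gradientFlow hf hθ (mem_Ici.mpr hτ) (mem_Ici.mpr (hτ.trans hu)) hu
      rw [← hzero, le_antisymm (hzero ▸ this) (hf0 _)]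
    rw [hgrad, norm_zero]
    simpa using (hasDerivWithinAt_const τ (Ici τ) (√(f (θ τ)))).congr_of_mem hconst self_mem_Ici

theorem norm_gradient_le_of_polyakLojasiewicz (hf0 : ∀ x, 0 ≤ f x) {c : ℝ} (hc : 0 < c)
    (hPL : ∀ x, c * f x ≤ ‖gradient f x‖ ^ 2) (x : E) :
    ‖gradient f x‖ ≤ 2 / √c * (‖gradient f x‖ ^ 2 / (2 * √(f x))) := by
  rcases (hf0 x).lt_or_eq with hpos | hzero
  · have hsqrt : √c * √(f x) ≤ ‖gradient f x‖ := by
      simpa [← sqrt_mul hc.le, sqrt_sq (norm_nonneg _)] using sqrt_le_sqrt (hPL x)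
    have hc' := sqrt_pos.mpr hc
    have hpos' := sqrt_pos.mpr hpos
    rw [show 2 / √c * (‖gradient f x‖ ^ 2 / (2 * √(f x)))
      = ‖gradient f x‖ ^ 2 / (√c * √(f x)) by field_simp, le_div_iff₀ (by positivity)]
    nlinarith [norm_nonneg (gradient f x)]
  · simp [gradient_eq_zero_of_nonneg_of_eq_zero hf0 hzero.symm]

theorem norm_sub_le_of_gradientFlow (hf : Differentiable ℝ f) (hf0 : ∀ x, 0 ≤ f x)
    {c : ℝ} (hc : 0 < c) (hPL : ∀ x, c * f x ≤ ‖gradient f x‖ ^ 2)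
    (hθ : ∀ τ, s ≤ τ → HasDerivAt θ (-gradient f (θ τ)) τ) {t : ℝ} (hst : s ≤ t) :
    ‖θ t - θ s‖ ≤ 2 / √c * (√(f (θ s)) - √(f (θ t))) := by
  have hθc : ContinuousOn θ (Icc s t) := fun τ hτ =>
    (hθ τ hτ.1).continuousAt.continuousWithinAt
  have hB : ContinuousOn (fun τ => 2 / √c * (√(f (θ s)) - √(f (θ τ)))) (Icc s t) :=
    continuousOn_const.mul (continuousOn_const.sub
      (Real.continuous_sqrt.comp_continuousOn (hf.continuous.comp_continuousOn hθc)))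
  refine image_norm_le_of_norm_deriv_right_le_deriv_boundary' (hθc.sub continuousOn_const)
    (fun τ hτ => ((hθ τ hτ.1).sub_const (θ s)).hasDerivWithinAt) (by simp) hB
    (fun τ hτ => ((hasDerivWithinAt_sqrt_comp_gradientFlow hf hf0 hθ hτ.1).const_sub _).const_mul _)
    (fun τ hτ => ?_) (right_mem_Icc.mpr hst)
  rw [norm_neg, neg_div, neg_neg]
  exact norm_gradient_le_of_polyakLojasiewicz hf0 hc hPL (θ τ)

end GradientFlow

def gradL {n m d : ℕ} (φ : ℝ → ℝ) (x : Fin n → EuclideanSpace ℝ (Fin d)) (y : Fin n → ℝ)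
    (θ : Param m d) : Param m d :=
  WithLp.toLp 2 fun j => ∑ i, (2 * (netF φ x i θ - y i) * deriv φ ⟪θ j, x i⟫) • x i

section Loss

variable {n m d : ℕ} {φ : ℝ → ℝ} {x : Fin n → EuclideanSpace ℝ (Fin d)} {y : Fin n → ℝ}

theorem lossL_nonneg (θ : Param m d) : 0 ≤ lossL φ x y θ :=
  Finset.sum_nonneg fun _ _ => sq_nonneg _

theorem hasGradientAt_lossL (hφ : Differentiable ℝ φ) (θ : Param m d) :
    HasGradientAt (lossL φ x y) (gradL φ x y θ) θ := by
  let coord (j : Fin m) (i : Fin n) : Param m d →L[ℝ] ℝ :=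
    (innerSLFlip ℝ (x i)).comp (PiLp.proj 2 _ j)
  have hnet (i : Fin n) : HasFDerivAt (netF φ x i) (∑ j, deriv φ ⟪θ j, x i⟫ • coord j i) θ :=
    .fun_sum fun j _ => (hφ _).hasDerivAt.comp_hasFDerivAt θ (coord j i).hasFDerivAt
  have hloss := HasFDerivAt.fun_sum (u := Finset.univ) fun i _ =>
    (hasDerivAt_pow 2 _).comp_hasFDerivAt θ ((hnet i).sub_const (y i))
  rw [hasGradientAt_iff_hasFDerivAt]
  refine hloss.congr_fderiv (ContinuousLinearMap.ext fun v => ?_)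
  rw [InnerProductSpace.toDual_apply_apply, PiLp.inner_apply]
  simp only [coord, gradL, sum_inner, real_inner_smul_left, _root_.sum_apply,
    _root_.smul_apply, ContinuousLinearMap.coe_comp, Function.comp_apply,
    PiLp.proj_apply, innerSLFlip_apply_apply, smul_eq_mul, Finset.mul_sum]
  rw [Finset.sum_comm]
  refine Finset.sum_congr rfl fun j _ => Finset.sum_congr rfl fun i _ => ?_
  rw [real_inner_comm (x i) (v j)]
  ring

theorem mul_lossL_le_norm_gradL_sq {μ ρ : ℝ} (hμ : 0 ≤ μ) (hρ : 0 ≤ ρ)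
    (hcoh : ∀ c : Fin n → ℝ, μ * ∑ i, (c i) ^ 2 ≤ ‖∑ i, c i • x i‖ ^ 2)
    (hφ' : ∀ z, ρ ≤ deriv φ z) (θ : Param m d) :
    4 * m * μ * ρ ^ 2 * lossL φ x y θ ≤ ‖gradL φ x y θ‖ ^ 2 := by
  have hblock (j : Fin m) : 4 * μ * ρ ^ 2 * lossL φ x y θ ≤ ‖gradL φ x y θ j‖ ^ 2 := calc
    4 * μ * ρ ^ 2 * lossL φ x y θ = μ * ∑ i, (2 * (netF φ x i θ - y i)) ^ 2 * ρ ^ 2 := by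
      rw [lossL, Finset.mul_sum, Finset.mul_sum]
      exact Finset.sum_congr rfl fun i _ => by ring
    _ ≤ μ * ∑ i, (2 * (netF φ x i θ - y i)) ^ 2 * deriv φ ⟪θ j, x i⟫ ^ 2 := by
      gcongr with i
      exact hφ' _
    _ = μ * ∑ i, (2 * (netF φ x i θ - y i) * deriv φ ⟪θ j, x i⟫) ^ 2 := by simp only [mul_pow]
    _ ≤ ‖gradL φ x y θ j‖ ^ 2 := hcoh _
  calc 4 * m * μ * ρ ^ 2 * lossL φ x y θ = ∑ _j : Fin m, 4 * μ * ρ ^ 2 * lossL φ x y θ := by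
        simp only [Finset.sum_const, Finset.card_univ, Fintype.card_fin, nsmul_eq_mul]
        ring
    _ ≤ ∑ j, ‖gradL φ x y θ j‖ ^ 2 := Finset.sum_le_sum fun j _ => hblock j
    _ = ‖gradL φ x y θ‖ ^ 2 := (PiLp.norm_sq_eq_of_L2 _ _).symm

end Loss

set_option maxHeartbeats 4000000 in
set_option synthInstance.maxHeartbeats 1000000 in
theorem stmt_11_general
    (n m d : ℕ) (hm : 1 ≤ m)
    (x : Fin n → EuclideanSpace ℝ (Fin d))
    (μ : ℝ) (hμ : 0 < μ)
    (hcoh : ∀ c : Fin n → ℝ, μ * ∑ i, (c i) ^ 2 ≤ ‖∑ i, c i • x i‖ ^ 2)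
    (y : Fin n → ℝ)
    (φ : ℝ → ℝ) (hφ : ContDiff ℝ (⊤ : ℕ∞) φ)
    (ρ1 : ℝ) (hρ1 : 0 < ρ1)
    (hφ' : ∀ z, ρ1 ≤ deriv φ z)
    (C : ℝ) (hC : C = 4 * (m : ℝ) * μ * ρ1 ^ 2)
    (θb : ℝ → Param m d)
    (hflow : ∀ t, 0 ≤ t → HasDerivAt θb (-(gradient (lossL φ x y) (θb t))) t) :
    ∀ s t, 0 ≤ s → s ≤ t →
      ‖θb t - θb s‖
          ≤ (2 / Real.sqrt C) *
            (Real.sqrt (lossL φ x y (θb s)) - Real.sqrt (lossL φ x y (θb t))) ∧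
      ‖θb t - θb s‖ ≤ (2 / Real.sqrt C) * Real.sqrt (lossL φ x y (θb s)) := by
  intro s t hs hst
  have hφd : Differentiable ℝ φ := hφ.differentiable (by simp)
  have hC0 : 0 < C := by
    have hm0 : (0 : ℝ) < m := by exact_mod_cast hm
    rw [hC]
    exact mul_pos (mul_pos (mul_pos four_pos hm0) hμ) (pow_pos hρ1 2)
  have hPL (θ : Param m d) : C * lossL φ x y θ ≤ ‖gradient (lossL φ x y) θ‖ ^ 2 := by
    rw [hC, (hasGradientAt_lossL hφd θ).gradient]
    exact mul_lossL_le_norm_gradL_sq hμ.le hρ1.le hcoh hφ' θ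
  have hlength := norm_sub_le_of_gradientFlow
    (fun θ => (hasGradientAt_lossL hφd θ).differentiableAt) lossL_nonneg hC0 hPL
    (fun τ hτ => hflow τ (hs.trans hτ)) hst
  refine ⟨hlength, hlength.trans ?_⟩
  exact mul_le_mul_of_nonneg_left (sub_le_self _ (Real.sqrt_nonneg _)) (by positivity)

set_option maxHeartbeats 4000000 in
set_option synthInstance.maxHeartbeats 1000000 in
/-- path-length bound for the Euclidean gradient flow of the loss:
‖θ̄(t) − θ̄(s)‖ ≤ (2/√C)(√L(θ̄(s)) − √L(θ̄(t))) ≤ (2/√C)√L(θ̄(s)) for 0 ≤ s ≤ t. -/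
theorem stmt_11
    (n m d : ℕ) (hn : 1 ≤ n) (hm : 1 ≤ m) (hd : 1 ≤ d)
    (x : Fin n → EuclideanSpace ℝ (Fin d)) (hx : ∀ i, ‖x i‖ = 1)
    (μ : ℝ) (hμ : 0 < μ)
    (hcoh : ∀ c : Fin n → ℝ, μ * ∑ i, (c i) ^ 2 ≤ ‖∑ i, c i • x i‖ ^ 2)
    (y : Fin n → ℝ)
    (φ : ℝ → ℝ) (hφ : ContDiff ℝ (⊤ : ℕ∞) φ)
    (ρ1 : ℝ) (hρ1 : 0 < ρ1)
    (hφ' : ∀ z, ρ1 ≤ deriv φ z)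
    (C : ℝ) (hC : C = 4 * (m : ℝ) * μ * ρ1 ^ 2)
    (θb : ℝ → Param m d)
    (hflow : ∀ t, 0 ≤ t → HasDerivAt θb (-(gradient (lossL φ x y) (θb t))) t) :
    ∀ s t, 0 ≤ s → s ≤ t →
      ‖θb t - θb s‖
          ≤ (2 / Real.sqrt C) *
            (Real.sqrt (lossL φ x y (θb s)) - Real.sqrt (lossL φ x y (θb t))) ∧
      ‖θb t - θb s‖ ≤ (2 / Real.sqrt C) * Real.sqrt (lossL φ x y (θb s)) :=
  stmt_11_general n m d hm x μ hμ hcoh y φ hφ ρ1 hρ1 hφ' C hC θb hflow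
end
end
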